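/- arXiv:2410.20453 — 2 statements merged into one kernel-verified Lean document; each statement's English description precedes it below -/
import Mathlib

section
/- The L₁ norm of the Dirichlet kernel satisfies ‖D_n‖_{L₁(𝕋)} ≥ C log n for some absolute constant C > 0 and all n ≥ 2, where D_n(t) = Σ_{k=-n}^{n} e^{ikt}. -/
open MeasureTheory Finset
open scoped ENNReal

noncomputable section

instance : Fact (0 < 2 * Real.pi) := ⟨by positivity⟩

/-- Normalized Haar (probability) measure on `𝕋 = ℝ/2πℤ`. -/
def μ𝕋 : Measure (AddCircle (2 * Real.pi)) := AddCircle.haarAddCircle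

/-- The Dirichlet kernel `D_n(t) = ∑_{k=-n}^{n} e^{ikt}`. -/
def dirichletKernel (n : ℕ) (x : AddCircle (2 * Real.pi)) : ℂ :=
  ∑ k ∈ Finset.Icc (-(n : ℤ)) (n : ℤ), fourier k x

/-
Since `D_n(t) sin(t/2) = sin((n + 1/2) t)` and `|sin(t/2)| ≤ t/2`, the substitution
`s = (n + 1/2) t` bounds `∫₀^{2π} |D_n|` below by `2 ∫₀^{nπ} |sin s| / s ds`. On
`[iπ, (i+1)π]` this integrand is at least `|sin s| / ((i+1)π)`, whose integral is
`2 / ((i+1)π)`, so the sum over `i < n` is a harmonic sum, bounded below by `log n`.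
-/

theorem Int.sum_Ico_sub {M : Type*} [AddCommGroup M] (f : ℤ → M) {a b : ℤ}
    (hab : a ≤ b) : ∑ k ∈ Ico a b, (f (k + 1) - f k) = f b - f a := by
  induction b, hab using Int.leInduction with
  | base => simp
  | succ b hab ih =>
    rw [← insert_Ico_right_eq_Ico_add_one hab, sum_insert (by simp), ih]
    abel

open Complex in
theorem dirichletKernel_mul_sin (n : ℕ) (t : ℝ) :
    dirichletKernel n t * Complex.sin (t / 2) = Complex.sin ((n + 1 / 2) * t) := by
  have two_I_mul_sin (z : ℂ) : 2 * I * Complex.sin z = exp (z * I) - exp (-z * I) := by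
    linear_combination I * two_sin z + (exp (-z * I) - exp (z * I)) * I_sq
  let g : ℤ → ℂ := fun k ↦ exp ((k - 1 / 2) * t * I)
  have hterm (k : ℤ) :
      fourier k (t : AddCircle (2 * Real.pi)) * (2 * I * Complex.sin (t / 2)) =
        g (k + 1) - g k := by
    rw [fourier_coe_apply, two_I_mul_sin, mul_sub, ← exp_add, ← exp_add]
    have hπ : (Real.pi : ℂ) ≠ 0 := ofReal_ne_zero.mpr Real.pi_ne_zero
    congr 2 <;> push_cast <;> field_simp <;> ring
  have h2I : (2 * I : ℂ) ≠ 0 := by simp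
  apply mul_left_cancel₀ h2I
  rw [two_I_mul_sin, ← mul_assoc, mul_comm (2 * I), mul_assoc, dirichletKernel, sum_mul]
  simp_rw [hterm]
  rw [← Ico_add_one_right_eq_Icc, Int.sum_Ico_sub g (by omega)]
  simp only [g]
  congr 2 <;> push_cast <;> ring

open Real

theorem abs_sin_le_mul_norm_dirichletKernel (n : ℕ) {t : ℝ} (ht : 0 ≤ t) :
    |sin ((n + 1 / 2) * t)| ≤ t / 2 * ‖dirichletKernel n t‖ := by
  have h := congrArg norm (dirichletKernel_mul_sin n t)
  rw [show ((n : ℂ) + 1 / 2) * t = ((n + 1 / 2) * t : ℝ) by push_cast; rfl] at h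
  norm_cast at h
  rw [← Real.norm_eq_abs, ← h, norm_mul, Complex.norm_real, mul_comm]
  gcongr
  exact abs_sin_le_abs.trans_eq (abs_of_nonneg (by positivity))

theorem integral_abs_sin_nat_mul_pi (i : ℕ) : ∫ x in i * π..(i + 1) * π, |sin x| = 2 := by
  have hper : Function.Periodic (fun x ↦ |sin x|) π := fun x ↦ by simp [sin_add_pi]
  have habs_sin_eq : Set.EqOn (fun x ↦ |sin x|) sin (Set.uIcc 0 π) := fun x hx ↦ by
    rw [Set.uIcc_of_le pi_pos.le] at hx
    exact abs_of_nonneg (sin_nonneg_of_nonneg_of_le_pi hx.1 hx.2)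
  rw [add_one_mul, hper.intervalIntegral_add_eq _ 0, zero_add,
    intervalIntegral.integral_congr habs_sin_eq, integral_sin]
  norm_num

theorem two_div_le_integral_of_abs_sin_le {f : ℝ → ℝ} (hf : Continuous f) (hf0 : ∀ s, 0 ≤ f s)
    (hsin : ∀ s, 0 ≤ s → |sin s| ≤ s * f s) (i : ℕ) :
    2 / ((i + 1) * π) ≤ ∫ s in i * π..(i + 1) * π, f s := by
  have hle : (i : ℝ) * π ≤ (i + 1) * π := by gcongr; linarith
  have hbound : ∀ s ∈ Set.Icc ((i : ℝ) * π) ((i + 1) * π), |sin s| / ((i + 1) * π) ≤ f s := by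
    intro s hs
    rw [div_le_iff₀ (by positivity)]
    calc |sin s| ≤ s * f s := hsin s (le_trans (by positivity) hs.1)
      _ ≤ (i + 1) * π * f s := by gcongr; exacts [hf0 s, hs.2]
      _ = _ := mul_comm _ _
  calc 2 / ((i + 1) * π) = ∫ s in i * π..(i + 1) * π, |sin s| / ((i + 1) * π) := by
        rw [intervalIntegral.integral_div, integral_abs_sin_nat_mul_pi]
    _ ≤ ∫ s in i * π..(i + 1) * π, f s :=
        intervalIntegral.integral_mono_on hle
          (Continuous.intervalIntegrable (by fun_prop) _ _) (hf.intervalIntegrable _ _) hbound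

theorem two_div_pi_mul_harmonic_le_integral_of_abs_sin_le {f : ℝ → ℝ} (hf : Continuous f)
    (hf0 : ∀ s, 0 ≤ f s) (hsin : ∀ s, 0 ≤ s → |sin s| ≤ s * f s) (n : ℕ) :
    2 / π * harmonic n ≤ ∫ s in 0..n * π, f s := by
  have hsplit := intervalIntegral.sum_integral_adjacent_intervals (a := fun k : ℕ ↦ k * π)
    (n := n) (f := f) (μ := volume) fun k _ ↦ hf.intervalIntegrable _ _
  simp only [Nat.cast_zero, zero_mul, Nat.cast_succ] at hsplit
  rw [← hsplit, harmonic, Rat.cast_sum, mul_sum]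
  gcongr with i
  push_cast
  exact (le_of_eq (by field_simp)).trans (two_div_le_integral_of_abs_sin_le hf hf0 hsin i)

theorem four_div_pi_mul_harmonic_le_integral_norm_dirichletKernel (n : ℕ) :
    4 / π * harmonic n ≤ ∫ t in 0..2 * π, ‖dirichletKernel n t‖ := by
  set N : ℝ := n + 1 / 2 with hN_def
  have hN : 0 < N := by positivity
  have hf : Continuous fun s : ℝ ↦ ‖dirichletKernel n ↑(s / N)‖ := by
    unfold dirichletKernel; fun_prop
  have hsin (s : ℝ) (hs : 0 ≤ s) : |sin s| ≤ s * (‖dirichletKernel n ↑(s / N)‖ / (2 * N)) := by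
    have h := abs_sin_le_mul_norm_dirichletKernel n (div_nonneg hs hN.le)
    rw [mul_div_cancel₀ s hN.ne'] at h
    calc |sin s| ≤ s / N / 2 * ‖dirichletKernel n ↑(s / N)‖ := h
      _ = _ := by field_simp
  have hlower := two_div_pi_mul_harmonic_le_integral_of_abs_sin_le (hf.div_const _)
    (fun s ↦ by positivity) hsin n
  rw [intervalIntegral.integral_div,
    intervalIntegral.integral_comp_div (fun t ↦ ‖dirichletKernel n t‖) hN.ne', zero_div,
    smul_eq_mul, le_div_iff₀ (by positivity)] at hlower
  have hend : n * π / N ≤ 2 * π := by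
    rw [div_le_iff₀ hN, hN_def]; nlinarith [pi_pos, mul_nonneg pi_pos.le n.cast_nonneg]
  calc 4 / π * harmonic n ≤ ∫ t in 0..n * π / N, ‖dirichletKernel n t‖ :=
        le_of_mul_le_mul_right (by linear_combination hlower) hN
    _ ≤ ∫ t in 0..2 * π, ‖dirichletKernel n t‖ :=
        intervalIntegral.integral_mono_interval le_rfl (by positivity) hend
          (ae_of_all _ fun _ ↦ norm_nonneg _) (Continuous.intervalIntegrable (by
            unfold dirichletKernel; fun_prop) _ _)

/-- **Lower bound for the Lebesgue constants.** There is an absolute constant `C > 0`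
such that `‖D_n‖_{L₁(𝕋)} ≥ C · log n` for all `n ≥ 2`. -/
theorem dirichletKernel_L1_norm_lower_bound :
    ∃ C : ℝ, 0 < C ∧ ∀ n : ℕ, 2 ≤ n →
      C * Real.log n ≤ ∫ x, ‖dirichletKernel n x‖ ∂μ𝕋 := by
  refine ⟨2 / π ^ 2, by positivity, fun n _ ↦ ?_⟩
  have hlog : Real.log n ≤ harmonic n := by
    simpa using log_le_harmonic_floor n n.cast_nonneg
  rw [μ𝕋, AddCircle.integral_haarAddCircle,
    ← AddCircle.intervalIntegral_preimage _ 0 fun x ↦ ‖dirichletKernel n x‖, zero_add, smul_eq_mul]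
  calc 2 / π ^ 2 * Real.log n ≤ (2 * π)⁻¹ * (4 / π * harmonic n) := by
        rw [show 2 / π ^ 2 = (2 * π)⁻¹ * (4 / π) by field_simp; ring, mul_assoc]
        gcongr
    _ ≤ _ := by
        gcongr
        exact four_div_pi_mul_harmonic_le_integral_norm_dirichletKernel n
end
end

section
/- Let r > 1/2 and γ = r/(r − 1/2). With m_s = ⌊2^{l(r+1/2)} 2^{-s(r−1/2)}⌋ + 1 for l ≤ s ≤ ⌊γl⌋, one has Σ_{s=l}^{⌊γl⌋} (2^s/m_s · log(2^s/m_s + 1))^{1/2} · 2^{-sr} ≤ C · 2^{-lr} for a constant C depending only on r. -/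
/-!
Since `m_s > 2^{l(r+1/2)} 2^{-s(r-1/2)}`, the ratio `2^s / m_s` is at most `2^{(s-l)(r+1/2)}`,
so its logarithm grows only linearly in `s - l`. Hence the `s`-th summand is at most
`2^{-lr} ((r+1/2)(s-l) + 1) q^{s-l}` with `q = 2^{-(r-1/2)/2} < 1`, and the whole sum is
bounded by `2^{-lr}` times the convergent series `∑ₙ ((r+1/2) n + 1) qⁿ`.
-/

open Finset Real

/-- The quantity `2^s / m_s`, where `m_s = ⌊2^{l(r+1/2)} 2^{-s(r-1/2)}⌋ + 1`. -/
noncomputable def blockRatio (r : ℝ) (l s : ℕ) : ℝ :=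
  (2 : ℝ) ^ (s : ℝ) /
    ((⌊(2 : ℝ) ^ ((l : ℝ) * (r + 1 / 2)) * 2 ^ (-(s : ℝ) * (r - 1 / 2))⌋₊ : ℝ) + 1)

lemma div_natFloor_add_one_le_div {y A : ℝ} (hy : 0 ≤ y) (hA : 0 < A) :
    y / ((⌊A⌋₊ : ℝ) + 1) ≤ y / A :=
  div_le_div_of_nonneg_left hy hA (Nat.lt_floor_add_one A).le

lemma blockRatio_nonneg (r : ℝ) (l s : ℕ) : 0 ≤ blockRatio r l s := by
  unfold blockRatio
  positivity

lemma blockRatio_le (r : ℝ) (l s : ℕ) :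
    blockRatio r l s ≤ 2 ^ (((s : ℝ) - l) * (r + 1 / 2)) := by
  calc blockRatio r l s
      ≤ 2 ^ (s : ℝ) / ((2 : ℝ) ^ ((l : ℝ) * (r + 1 / 2)) * 2 ^ (-(s : ℝ) * (r - 1 / 2))) :=
        div_natFloor_add_one_le_div (by positivity) (by positivity)
    _ = 2 ^ (((s : ℝ) - l) * (r + 1 / 2)) := by
        rw [← rpow_add two_pos, ← rpow_sub two_pos]
        ring_nf

lemma logb_two_add_one_le {R t : ℝ} (hR : 0 ≤ R) (hRt : R ≤ 2 ^ t) (ht : 0 ≤ t) :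
    logb 2 (R + 1) ≤ t + 1 := by
  have h1 : (1 : ℝ) ≤ 2 ^ t := one_le_rpow one_le_two ht
  calc logb 2 (R + 1) ≤ logb 2 (2 ^ (t + 1)) := by
        refine logb_le_logb_of_le one_lt_two (by linarith) ?_
        rw [rpow_add_one two_ne_zero]
        linarith
    _ = t + 1 := logb_rpow two_pos (by norm_num)

lemma sqrt_mul_logb_two_add_one_le {R t : ℝ} (hR : 0 ≤ R) (hRt : R ≤ 2 ^ t) (ht : 0 ≤ t) :
    (R * logb 2 (R + 1)) ^ (1 / 2 : ℝ) ≤ 2 ^ (t / 2) * (t + 1) := by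
  have hlog : 0 ≤ logb 2 (R + 1) := logb_nonneg one_lt_two (by linarith)
  calc (R * logb 2 (R + 1)) ^ (1 / 2 : ℝ)
      ≤ (2 ^ t * (t + 1)) ^ (1 / 2 : ℝ) :=
        rpow_le_rpow (by positivity)
          (mul_le_mul hRt (logb_two_add_one_le hR hRt ht) hlog (by positivity)) (by norm_num)
    _ = 2 ^ (t / 2) * (t + 1) ^ (1 / 2 : ℝ) := by
        rw [mul_rpow (by positivity) (by positivity), ← rpow_mul zero_le_two]
        ring_nf
    _ ≤ 2 ^ (t / 2) * (t + 1) := by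
        gcongr
        calc (t + 1) ^ (1 / 2 : ℝ) ≤ (t + 1) ^ (1 : ℝ) :=
              rpow_le_rpow_of_exponent_le (by linarith) (by norm_num)
          _ = t + 1 := rpow_one _

lemma blockRatio_summand_le (r : ℝ) (hr : 0 ≤ r + 1 / 2) (l n : ℕ) :
    (blockRatio r l (l + n) * logb 2 (blockRatio r l (l + n) + 1)) ^ (1 / 2 : ℝ) *
        2 ^ (-((l + n : ℕ) : ℝ) * r) ≤
      2 ^ (-(l : ℝ) * r) * (((r + 1 / 2) * n + 1) * (2 ^ (-((r - 1 / 2) / 2)) : ℝ) ^ n) := by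
  have hexp : ((l + n : ℕ) : ℝ) - l = n := by push_cast; ring
  have hbound := sqrt_mul_logb_two_add_one_le (blockRatio_nonneg r l (l + n))
    (hexp ▸ blockRatio_le r l (l + n)) (by positivity)
  calc _ ≤ 2 ^ ((n : ℝ) * (r + 1 / 2) / 2) * ((n : ℝ) * (r + 1 / 2) + 1) *
          2 ^ (-((l + n : ℕ) : ℝ) * r) := by gcongr
    _ = 2 ^ ((n : ℝ) * (r + 1 / 2) / 2 + -((l + n : ℕ) : ℝ) * r) *
          ((n : ℝ) * (r + 1 / 2) + 1) := by rw [rpow_add two_pos]; ring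
    _ = 2 ^ (-(l : ℝ) * r + -((r - 1 / 2) / 2) * n) * ((n : ℝ) * (r + 1 / 2) + 1) := by
        congr 2; push_cast; ring
    _ = _ := by rw [rpow_add two_pos, rpow_mul_natCast zero_le_two]; ring

lemma summable_affine_mul_geometric {a b q : ℝ} (hq : ‖q‖ < 1) :
    Summable fun n : ℕ => (a * n + b) * q ^ n := by
  have hpow := ((summable_pow_mul_geometric_of_norm_lt_one 1 hq).mul_left a).add
    ((summable_geometric_of_norm_lt_one hq).mul_left b)
  refine hpow.congr fun n => ?_
  simp only [pow_one]
  ring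

theorem I5_estimate_theorem3_general
    (r γ : ℝ) (hr : 1 / 2 < r) :
    ∃ C : ℝ, 0 < C ∧ ∀ l : ℕ, 1 ≤ l →
      (∑ s ∈ Finset.Icc l ⌊γ * l⌋₊,
        ((2 : ℝ) ^ (s : ℝ) /
            ((⌊(2 : ℝ) ^ ((l : ℝ) * (r + 1 / 2)) * 2 ^ (-(s : ℝ) * (r - 1 / 2))⌋₊ : ℝ) + 1) *
          Real.logb 2
            ((2 : ℝ) ^ (s : ℝ) /
                ((⌊(2 : ℝ) ^ ((l : ℝ) * (r + 1 / 2)) *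
                    2 ^ (-(s : ℝ) * (r - 1 / 2))⌋₊ : ℝ) + 1) + 1)) ^ ((1 : ℝ) / 2) *
          2 ^ (-(s : ℝ) * r)) ≤
      C * 2 ^ (-(l : ℝ) * r) := by
  set q : ℝ := 2 ^ (-((r - 1 / 2) / 2))
  have hq : ‖q‖ < 1 := by
    rw [norm_of_nonneg (by positivity)]
    exact rpow_lt_one_of_one_lt_of_neg one_lt_two (by linarith)
  set g : ℕ → ℝ := fun n => ((r + 1 / 2) * n + 1) * q ^ n
  have hg : ∀ n, 0 ≤ g n := fun n => by positivity
  have hsum : Summable g := summable_affine_mul_geometric hq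
  refine ⟨∑' n, g n, hsum.tsum_pos hg 0 (by simp [g]), fun l _ => ?_⟩
  rw [← Ico_add_one_right_eq_Icc, sum_Ico_eq_sum_range]
  calc _ ≤ ∑ n ∈ range (⌊γ * l⌋₊ + 1 - l), 2 ^ (-(l : ℝ) * r) * g n :=
        sum_le_sum fun n _ => blockRatio_summand_le r (by linarith) l n
    _ = 2 ^ (-(l : ℝ) * r) * ∑ n ∈ range (⌊γ * l⌋₊ + 1 - l), g n := (mul_sum _ _ _).symm
    _ ≤ 2 ^ (-(l : ℝ) * r) * ∑' n, g n :=
        mul_le_mul_of_nonneg_left (hsum.sum_le_tsum _ fun n _ => hg n) (by positivity)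
    _ = (∑' n, g n) * 2 ^ (-(l : ℝ) * r) := mul_comm _ _

/-- **Estimate (n29) of the term `I₅` in the proof of Theorem 3.**
For `r > 1/2`, `γ = r/(r-1/2)` and `m_s = ⌊2^{l(r+1/2)} 2^{-s(r-1/2)}⌋ + 1`
(`l ≤ s ≤ ⌊γl⌋`), one has
`∑_{s=l}^{⌊γl⌋} (2^s/m_s · log₂(2^s/m_s + 1))^{1/2} · 2^{-sr} ≤ C · 2^{-lr}`. -/
theorem I5_estimate_theorem3
    (r γ : ℝ) (hr : 1 / 2 < r) (hγ : γ = r / (r - 1 / 2)) :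
    ∃ C : ℝ, 0 < C ∧ ∀ l : ℕ, 1 ≤ l →
      (∑ s ∈ Finset.Icc l ⌊γ * l⌋₊,
        ((2 : ℝ) ^ (s : ℝ) /
            ((⌊(2 : ℝ) ^ ((l : ℝ) * (r + 1 / 2)) * 2 ^ (-(s : ℝ) * (r - 1 / 2))⌋₊ : ℝ) + 1) *
          Real.logb 2
            ((2 : ℝ) ^ (s : ℝ) /
                ((⌊(2 : ℝ) ^ ((l : ℝ) * (r + 1 / 2)) *
                    2 ^ (-(s : ℝ) * (r - 1 / 2))⌋₊ : ℝ) + 1) + 1)) ^ ((1 : ℝ) / 2) *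
          2 ^ (-(s : ℝ) * r)) ≤
      C * 2 ^ (-(l : ℝ) * r) :=
  I5_estimate_theorem3_general r γ hr
end
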